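/- arXiv:1909.02155 — 5 statements merged into one kernel-verified Lean document; each statement's English description precedes it below -/
import Mathlib

section
/- If the partitioning problem BP(d, C; w) is feasible (i.e., there is a partition of the multiset containing d copies of each weight w_1 ≥ ... ≥ w_n into bins B_1, ..., B_n with exactly d balls each and total weight of B_i at most C_i), then for every index i with 1 ≤ i ≤ n, we have C_i + C_{i+1} + ... + C_n ≥ d·(w_i + ... + w_n). -/
/-!
Bins `i, …, n` hold `d (n - i + 1)` balls in total, at most `d` of each weight. Since the
weights are non-increasing, their total weight is smallest when every one of these balls has
one of the lightest weights `w_i, …, w_n`, `d` balls each; that minimum is `d (w_i + ⋯ + w_n)`,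
and the total weight is at most `C_i + ⋯ + C_n`.
-/

open Finset

theorem Finset.bathtub_mul_sum_le_sum_mul {ι R : Type*} [CommRing R] [PartialOrder R]
    [IsOrderedRing R] {s t : Finset ι} (hts : t ⊆ s) {w b : ι → R} {c d : R}
    (hw_in : ∀ k ∈ t, w k ≤ c) (hw_out : ∀ k ∈ s, k ∉ t → c ≤ w k)
    (hb_nonneg : ∀ k ∈ s, 0 ≤ b k) (hb_le : ∀ k ∈ s, b k ≤ d)
    (hb_sum : ∑ k ∈ s, b k = #t • d) :
    d * ∑ k ∈ t, w k ≤ ∑ k ∈ s, w k * b k := by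
  classical
  set e : ι → R := fun k => if k ∈ t then d else 0
  have he_sum : ∑ k ∈ s, e k = #t • d := by
    simp [e, sum_ite_mem, inter_eq_right.2 hts]
  have he_w : ∑ k ∈ s, w k * e k = d * ∑ k ∈ t, w k := by
    simp [e, mul_ite, sum_ite_mem, inter_eq_right.2 hts, mul_sum, mul_comm]
  -- As `∑ b = ∑ e`, the gap is `∑ (w - c) * (b - e)`, whose terms are all nonnegative.
  have hc : c * ∑ k ∈ s, (b k - e k) = 0 := by
    rw [sum_sub_distrib, hb_sum, he_sum, sub_self, mul_zero]
  have hdiff : ∑ k ∈ s, (w k - c) * (b k - e k)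
      = ∑ k ∈ s, w k * b k - ∑ k ∈ s, w k * e k - c * ∑ k ∈ s, (b k - e k) := by
    simp only [mul_sum, ← sum_sub_distrib]
    exact sum_congr rfl fun _ _ => by ring
  rw [hc, sub_zero, he_w] at hdiff
  have hterm : ∀ k ∈ s, 0 ≤ (w k - c) * (b k - e k) := by
    intro k hk
    by_cases hkt : k ∈ t
    · simp only [e, hkt, if_true]
      exact mul_nonneg_of_nonpos_of_nonpos (sub_nonpos.2 (hw_in k hkt)) (sub_nonpos.2 (hb_le k hk))
    · simp only [e, hkt, if_false, sub_zero]
      exact mul_nonneg (sub_nonneg.2 (hw_out k hk hkt)) (hb_nonneg k hk)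
  exact sub_nonneg.1 (hdiff ▸ sum_nonneg hterm)

theorem necessary_conditions_of_feasible_general
    (n d : ℕ)
    (w : ℕ → ℕ) (C : ℕ → ℤ)
    (hw : ∀ i, 1 ≤ i → i < n → w (i + 1) ≤ w i)
    (m : ℕ → ℕ → ℕ)
    (hrow : ∀ i ∈ Finset.Icc 1 n, ∑ j ∈ Finset.Icc 1 n, m i j = d)
    (hcol : ∀ j ∈ Finset.Icc 1 n, ∑ i ∈ Finset.Icc 1 n, m i j = d)
    (hcap : ∀ j ∈ Finset.Icc 1 n,
      ((∑ i ∈ Finset.Icc 1 n, m i j * w i : ℕ) : ℤ) ≤ C j) :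
    ∀ i ∈ Finset.Icc 1 n,
      (d : ℤ) * ∑ j ∈ Finset.Icc i n, (w j : ℤ) ≤ ∑ j ∈ Finset.Icc i n, C j := by
  intro i hi
  have hw_anti : AntitoneOn w (Set.Icc 1 n) :=
    antitoneOn_of_add_one_le Set.ordConnected_Icc fun a _ ha ha' => hw a ha.1 ha'.2
  have htail : Icc i n ⊆ Icc 1 n := Icc_subset_Icc_left (mem_Icc.1 hi).1
  have hi_mem : i ∈ Set.Icc 1 n := mem_Icc.1 hi
  set b : ℕ → ℤ := fun k => ((∑ j ∈ Icc i n, m k j : ℕ) : ℤ)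
  have hb_le : ∀ k ∈ Icc 1 n, b k ≤ d := fun k hk =>
    Nat.cast_le.2 (hrow k hk ▸ sum_le_sum_of_subset htail)
  have hb_sum : ∑ k ∈ Icc 1 n, b k = #(Icc i n) • (d : ℤ) := by
    simp only [b, Nat.cast_sum]
    rw [sum_comm, ← sum_const]
    exact sum_congr rfl fun j hj => by exact_mod_cast hcol j (htail hj)
  calc (d : ℤ) * ∑ j ∈ Icc i n, (w j : ℤ)
      ≤ ∑ k ∈ Icc 1 n, (w k : ℤ) * b k :=
        bathtub_mul_sum_le_sum_mul htail (c := (w i : ℤ))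
          (fun k hk => Nat.cast_le.2 (hw_anti hi_mem (mem_Icc.1 (htail hk)) (mem_Icc.1 hk).1))
          (fun k hk hki => Nat.cast_le.2 (hw_anti (mem_Icc.1 hk) hi_mem
            (by simp only [mem_Icc] at hk hki; omega)))
          (fun k _ => Nat.cast_nonneg _) hb_le hb_sum
    _ = ∑ j ∈ Icc i n, ((∑ k ∈ Icc 1 n, m k j * w k : ℕ) : ℤ) := by
        simp only [b, Nat.cast_sum, Nat.cast_mul, mul_sum, mul_comm]
        exact sum_comm
    _ ≤ ∑ j ∈ Icc i n, C j := sum_le_sum fun j hj => hcap j (htail hj)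

/-- If BP(d, C; w) is feasible, then for every i with 1 ≤ i ≤ n,
C_i + ⋯ + C_n ≥ d·(w_i + ⋯ + w_n). Balls of weight w_i placed in bin j are
counted by m i j. -/
theorem necessary_conditions_of_feasible
    (n d : ℕ) (hn : 1 ≤ n) (hd : 1 ≤ d)
    (w : ℕ → ℕ) (C : ℕ → ℤ)
    (hw : ∀ i, 1 ≤ i → i < n → w (i + 1) ≤ w i)
    (hC : ∀ i, 1 ≤ i → i < n → C (i + 1) ≤ C i)
    (m : ℕ → ℕ → ℕ)
    (hrow : ∀ i ∈ Finset.Icc 1 n, ∑ j ∈ Finset.Icc 1 n, m i j = d)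
    (hcol : ∀ j ∈ Finset.Icc 1 n, ∑ i ∈ Finset.Icc 1 n, m i j = d)
    (hcap : ∀ j ∈ Finset.Icc 1 n,
      ((∑ i ∈ Finset.Icc 1 n, m i j * w i : ℕ) : ℤ) ≤ C j) :
    ∀ i ∈ Finset.Icc 1 n,
      (d : ℤ) * ∑ j ∈ Finset.Icc i n, (w j : ℤ) ≤ ∑ j ∈ Finset.Icc i n, C j :=
  necessary_conditions_of_feasible_general n d w C hw m hrow hcol hcap
end

section
/- If λ = (λ_1, ..., λ_r) is a partition with distinct nonzero parts λ_1 > λ_2 > ... > λ_r > 0, then b(λ) = λ_1 − λ_r − r + 1. -/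
/-!
For distinct parts every block of equal rows of `λ` is a single row, so the conjugate
decomposition has unit steps `h t = r - t`, `k = r - 1` and `h k = 1`.  Then
`b(λ) = Σ_{t=1}^{k} (a_t - 1)`, while `λ_1 = a_0 + ⋯ + a_k` and `λ_r = a_0`.
-/

/-- The conjugate partition of the sequence `lam` (of length `r`, non-increasing on
`[1, r]`) is `(r^{a_0}, h_1^{a_1}, …, h_k^{a_k})` with `h_0 = r`,
`r > h_1 > ⋯ > h_k > 0`, `a_1, …, a_k > 0`.  Equivalently, the rows satisfy
`lam i = a_0 + ⋯ + a_t` for `h_{t+1} < i ≤ h_t` and `lam i = a_0 + ⋯ + a_k`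
for `1 ≤ i ≤ h_k`. -/
def ConjDecomp (lam : ℕ → ℕ) (r k : ℕ) (h a : ℕ → ℕ) : Prop :=
  h 0 = r ∧
  (∀ t, t < k → h (t + 1) < h t) ∧
  0 < h k ∧
  (∀ t, 1 ≤ t → t ≤ k → 0 < a t) ∧
  (∀ t, t < k → ∀ i, h (t + 1) < i → i ≤ h t →
      lam i = ∑ s ∈ Finset.range (t + 1), a s) ∧
  (∀ i, 1 ≤ i → i ≤ h k → lam i = ∑ s ∈ Finset.range (k + 1), a s)

/-- The constant `b(λ)` of Definition 1.4: `b(λ) = 0` if `k = 0`, and otherwise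
`b(λ) = Σ_{t=1}^{k} (h_{t−1} − h_t)(a_t − 1) + (h_k − 1)(a_k − 1)`. -/
def bVal (k : ℕ) (h a : ℕ → ℕ) : ℕ :=
  if k = 0 then 0
  else (∑ t ∈ Finset.Icc 1 k, (h (t - 1) - h t) * (a t - 1)) + (h k - 1) * (a k - 1)

open Finset

theorem le_add_one_of_eq_on_Ioc {lam : ℕ → ℕ} {r m n c : ℕ}
    (hstrict : ∀ i, 1 ≤ i → i < r → lam (i + 1) < lam i) (hn : n ≤ r)
    (hconst : ∀ i, m < i → i ≤ n → lam i = c) : n ≤ m + 1 := by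
  by_contra! hlt
  have hm1 := hconst (m + 1) (by omega) (by omega)
  have hm2 := hconst (m + 1 + 1) (by omega) (by omega)
  have := hstrict (m + 1) (by omega) (by omega)
  omega

theorem bVal_eq_of_unit_steps {k : ℕ} {h a : ℕ → ℕ}
    (hstep : ∀ t, 1 ≤ t → t ≤ k → h (t - 1) = h t + 1) (hk : h k = 1)
    (ha : ∀ t, 1 ≤ t → t ≤ k → 0 < a t) :
    (bVal k h a : ℤ) = ∑ t ∈ Icc 1 k, (a t : ℤ) - k := by
  have hterm : ∀ t ∈ Icc 1 k, (((h (t - 1) - h t) * (a t - 1) : ℕ) : ℤ) = a t - 1 := by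
    intro t ht
    rw [mem_Icc] at ht
    have := ha t ht.1 ht.2
    rw [hstep t ht.1 ht.2, Nat.add_sub_cancel_left, one_mul]
    omega
  unfold bVal
  split_ifs with hk0
  · simp [hk0]
  · rw [hk, Nat.sub_self, zero_mul, add_zero, Nat.cast_sum, sum_congr rfl hterm,
      sum_sub_distrib]
    simp

namespace ConjDecomp

variable {lam : ℕ → ℕ} {r k : ℕ} {h a : ℕ → ℕ}

theorem lam_one_eq_sum (hconj : ConjDecomp lam r k h a) :
    lam 1 = ∑ s ∈ range (k + 1), a s :=
  let ⟨_, _, hkpos, _, _, hlast⟩ := hconj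
  hlast 1 le_rfl hkpos

theorem lam_r_eq_a_zero (hconj : ConjDecomp lam r k h a) : lam r = a 0 := by
  obtain ⟨h0, hdec, hkpos, -, hblock, hlast⟩ := hconj
  rcases Nat.eq_zero_or_pos k with rfl | hk
  · simpa using hlast r (by omega) (by omega)
  · simpa using hblock 0 hk r (by have := hdec 0 hk; omega) (by omega)

section StrictAnti

variable (hstrict : ∀ i, 1 ≤ i → i < r → lam (i + 1) < lam i)
include hstrict

theorem h_add_eq_r_of_strictAnti (hconj : ConjDecomp lam r k h a) :
    ∀ t ≤ k, h t + t = r := by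
  obtain ⟨h0, hdec, -, -, hblock, -⟩ := hconj
  intro t ht
  induction t with
  | zero => simpa using h0
  | succ t ih =>
    have ih := ih (by omega)
    have hlt := hdec t (by omega)
    have := le_add_one_of_eq_on_Ioc hstrict (by omega) (hblock t (by omega))
    omega

theorem h_k_eq_one_of_strictAnti (hconj : ConjDecomp lam r k h a) : h k = 1 := by
  have hk := hconj.h_add_eq_r_of_strictAnti hstrict k le_rfl
  obtain ⟨-, -, hkpos, -, -, hlast⟩ := hconj
  have := le_add_one_of_eq_on_Ioc hstrict (by omega) (hlast · ·)
  omega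

end StrictAnti

end ConjDecomp

theorem bVal_of_distinct_parts_general
    (r : ℕ) (lam : ℕ → ℕ)
    (hstrict : ∀ i, 1 ≤ i → i < r → lam (i + 1) < lam i)
    (k : ℕ) (h a : ℕ → ℕ)
    (hconj : ConjDecomp lam r k h a) :
    (bVal k h a : ℤ) = (lam 1 : ℤ) - (lam r : ℤ) - (r : ℤ) + 1 := by
  have hapos := hconj.2.2.2.1
  have hsteps := hconj.h_add_eq_r_of_strictAnti hstrict
  have hlast := hconj.h_k_eq_one_of_strictAnti hstrict
  have hrk : r = k + 1 := by have := hsteps k le_rfl; omega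
  have hb := bVal_eq_of_unit_steps
    (fun t ht htk => by have := hsteps t htk; have := hsteps (t - 1) (by omega); omega)
    hlast hapos
  rw [hb, hconj.lam_one_eq_sum, hconj.lam_r_eq_a_zero, hrk, Nat.range_succ_eq_Icc_zero,
    ← insert_Icc_add_one_left_eq_Icc k.zero_le, sum_insert (by simp)]
  push_cast
  ring

/-- if `λ = (λ_1 > λ_2 > ⋯ > λ_r > 0)` has distinct nonzero parts, then
`b(λ) = λ_1 − λ_r − r + 1`. -/
theorem bVal_of_distinct_parts
    (r : ℕ) (hr : 1 ≤ r) (lam : ℕ → ℕ)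
    (hstrict : ∀ i, 1 ≤ i → i < r → lam (i + 1) < lam i)
    (hpos : 0 < lam r)
    (k : ℕ) (h a : ℕ → ℕ)
    (hconj : ConjDecomp lam r k h a) :
    (bVal k h a : ℤ) = (lam 1 : ℤ) - (lam r : ℤ) - (r : ℤ) + 1 :=
  bVal_of_distinct_parts_general r lam hstrict k h a hconj
end

section
/- Let W_min denote the minimum of w(B_1) over all 1-feasible partitions B_•. Suppose W_min > C_1 and B_• is a 1-feasible partition. Then for each i ≥ 2, the bin B_i contains some ball whose weight differs from w_1 (equivalently, n_1(B_i) < d). -/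
/-- A valid partition: `m i j` balls of weight `w i` in bin `j`, with `d` balls of each
weight and `d` balls in each bin. -/
def ValidPartition (n d : ℕ) (m : ℕ → ℕ → ℕ) : Prop :=
  (∀ i ∈ Finset.Icc 1 n, ∑ j ∈ Finset.Icc 1 n, m i j = d) ∧
  (∀ j ∈ Finset.Icc 1 n, ∑ i ∈ Finset.Icc 1 n, m i j = d)

/-- Total weight of bin `j`. -/
def binWeight (n : ℕ) (w : ℕ → ℕ) (m : ℕ → ℕ → ℕ) (j : ℕ) : ℕ :=
  ∑ i ∈ Finset.Icc 1 n, m i j * w i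

/-- 1-feasibility: the capacities of bins `2, …, n` are respected. -/
def OneFeasible (n d : ℕ) (w : ℕ → ℕ) (C : ℕ → ℤ) (m : ℕ → ℕ → ℕ) : Prop :=
  ValidPartition n d m ∧ ∀ j ∈ Finset.Icc 2 n, (binWeight n w m j : ℤ) ≤ C j

/-!
If some bin `B_i` with `i ≥ 2` held only balls of the top weight `w_1`, it would weigh
`d w_1 ≥ w(B_1)`. Exchanging the contents of `B_1` and `B_i` then keeps every capacity
`C_j` with `j ≥ 2` (the new `B_i` weighs at most the old one) and gives a 1-feasible partition
with `w(B_1) = d w_1 ≤ C_i ≤ C_1`, contradicting `W_min > C_1`.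
-/

open Finset

lemma le_apply_one_of_succ_le {α : Type*} [Preorder α] {n : ℕ} {f : ℕ → α}
    (hf : ∀ i, 1 ≤ i → i < n → f (i + 1) ≤ f i) {k : ℕ} (hk : k ∈ Icc 1 n) : f k ≤ f 1 := by
  obtain ⟨hk1, hkn⟩ := mem_Icc.mp hk
  induction k, hk1 using Nat.le_induction with
  | base => exact le_rfl
  | succ k hk1 ih => exact (hf k hk1 (by omega)).trans (ih (mem_Icc.mpr ⟨hk1, by omega⟩) (by omega))

lemma Equiv.Perm.apply_mem_of_subset {ι : Type*} {σ : Equiv.Perm ι} {s : Finset ι}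
    (hs : {a | σ a ≠ a} ⊆ s) {x : ι} (hx : x ∈ s) : σ x ∈ s := by
  by_cases hfix : σ x = x
  · rwa [hfix]
  · exact hs fun h => hfix (σ.injective h)

section

variable {n d : ℕ} {w : ℕ → ℕ} {m : ℕ → ℕ → ℕ} {j : ℕ}

lemma binWeight_le_mul (hcol : ∑ k ∈ Icc 1 n, m k j = d) {W : ℕ}
    (hW : ∀ k ∈ Icc 1 n, w k ≤ W) : binWeight n w m j ≤ d * W :=
  calc binWeight n w m j ≤ ∑ k ∈ Icc 1 n, m k j * W :=
        sum_le_sum fun k hk => Nat.mul_le_mul_left _ (hW k hk)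
    _ = d * W := by rw [← sum_mul, hcol]

lemma binWeight_eq_mul (hcol : ∑ k ∈ Icc 1 n, m k j = d) {W : ℕ}
    (hW : ∀ k ∈ Icc 1 n, 0 < m k j → w k = W) : binWeight n w m j = d * W :=
  calc binWeight n w m j = ∑ k ∈ Icc 1 n, m k j * W := by
        refine sum_congr rfl fun k hk => ?_
        rcases (m k j).eq_zero_or_pos with h | h
        · simp [h]
        · rw [hW k hk h]
    _ = d * W := by rw [← sum_mul, hcol]

lemma binWeight_comp_perm (σ : Equiv.Perm ℕ) :
    binWeight n w (fun k j => m k (σ j)) j = binWeight n w m (σ j) := rfl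

end

lemma ValidPartition.comp_perm {n d : ℕ} {m : ℕ → ℕ → ℕ} (hm : ValidPartition n d m)
    {σ : Equiv.Perm ℕ} (hσ : {a | σ a ≠ a} ⊆ Icc 1 n) :
    ValidPartition n d (fun k j => m k (σ j)) :=
  ⟨fun k hk => (σ.sum_comp _ (m k) hσ).trans (hm.1 k hk),
    fun j hj => hm.2 (σ j) (σ.apply_mem_of_subset hσ hj)⟩

lemma swap_support_subset_Icc {n a b : ℕ} (ha : a ∈ Icc 1 n) (hb : b ∈ Icc 1 n) :
    {x | Equiv.swap a b x ≠ x} ⊆ Icc 1 n := by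
  intro x hx
  obtain ⟨-, rfl | rfl⟩ := Equiv.swap_apply_ne_self_iff.mp hx <;> assumption

lemma OneFeasible.swap_one {n d : ℕ} {w : ℕ → ℕ} {C : ℕ → ℤ} {m : ℕ → ℕ → ℕ}
    (hm : OneFeasible n d w C m) {i : ℕ} (hi : i ∈ Icc 2 n)
    (hle : binWeight n w m 1 ≤ binWeight n w m i) :
    OneFeasible n d w C (fun k j => m k (Equiv.swap 1 i j)) := by
  obtain ⟨hi2, hin⟩ := mem_Icc.mp hi
  refine ⟨hm.1.comp_perm (swap_support_subset_Icc (mem_Icc.mpr ⟨le_rfl, by omega⟩)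
    (mem_Icc.mpr ⟨by omega, hin⟩)), fun j hj => ?_⟩
  rw [binWeight_comp_perm]
  by_cases hji : j = i
  · subst hji
    rw [Equiv.swap_apply_right]
    exact (Int.ofNat_le.mpr hle).trans (hm.2 j hi)
  · rw [Equiv.swap_apply_of_ne_of_ne (by have := (mem_Icc.mp hj).1; omega) hji]
    exact hm.2 j hj

theorem bin_not_only_top_weight_general
    (n d : ℕ)
    (w : ℕ → ℕ) (C : ℕ → ℤ)
    (hw : ∀ i, 1 ≤ i → i < n → w (i + 1) ≤ w i)
    (hC : ∀ i, 1 ≤ i → i < n → C (i + 1) ≤ C i)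
    (hWmin : ∀ m' : ℕ → ℕ → ℕ, OneFeasible n d w C m' →
      (C 1 < (binWeight n w m' 1 : ℤ)))
    (m : ℕ → ℕ → ℕ) (hm : OneFeasible n d w C m) :
    ∀ i ∈ Finset.Icc 2 n, ∃ i' ∈ Finset.Icc 1 n, w i' ≠ w 1 ∧ 0 < m i' i := by
  intro i hi
  by_contra! hpure
  obtain ⟨hi2, hin⟩ := mem_Icc.mp hi
  have hi1 : i ∈ Icc 1 n := mem_Icc.mpr ⟨by omega, hin⟩
  have hone : 1 ∈ Icc 1 n := mem_Icc.mpr ⟨le_rfl, by omega⟩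
  have hBi : binWeight n w m i = d * w 1 :=
    binWeight_eq_mul (hm.1.2 i hi1) fun k hk hpos => by_contra fun h => (hpure k hk h).not_gt hpos
  have hB1 : binWeight n w m 1 ≤ d * w 1 :=
    binWeight_le_mul (hm.1.2 1 hone) fun k hk => le_apply_one_of_succ_le hw hk
  have hswap := hWmin _ (hm.swap_one hi (hBi ▸ hB1))
  rw [binWeight_comp_perm, Equiv.swap_apply_left, hBi] at hswap
  have hCi : (binWeight n w m i : ℤ) ≤ C 1 := (hm.2 i hi).trans (le_apply_one_of_succ_le hC hi1)
  rw [hBi] at hCi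
  exact hswap.not_ge hCi

/-- Lemma 2.4: if every 1-feasible partition has `w(B_1) > C_1`
(i.e. `W_min > C_1`) and `B_•` is 1-feasible, then for each `i ≥ 2` the bin `B_i`
contains a ball of weight different from `w_1`. -/
theorem bin_not_only_top_weight
    (n d : ℕ) (hn : 1 ≤ n) (hd : 1 ≤ d)
    (w : ℕ → ℕ) (C : ℕ → ℤ)
    (hw : ∀ i, 1 ≤ i → i < n → w (i + 1) ≤ w i)
    (hC : ∀ i, 1 ≤ i → i < n → C (i + 1) ≤ C i)
    (hWmin : ∀ m' : ℕ → ℕ → ℕ, OneFeasible n d w C m' →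
      (C 1 < (binWeight n w m' 1 : ℤ)))
    (m : ℕ → ℕ → ℕ) (hm : OneFeasible n d w C m) :
    ∀ i ∈ Finset.Icc 2 n, ∃ i' ∈ Finset.Icc 1 n, w i' ≠ w 1 ∧ 0 < m i' i :=
  bin_not_only_top_weight_general n d w C hw hC hWmin m hm
end

section
/- Let i ≥ 1 and j ≥ 0. The partitioning problem BP(d, C; w) is (i+j−1)-feasible if and only if the truncated problem BP(d, C^{≥i}; w^{≥i}) is j-feasible, where C^{≥i} = (C_i, ..., C_n) and w^{≥i} = (w_i, ..., w_n). -/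
/-- `Feas d w C lo n k`: the partitioning problem with bins and weights indexed
`lo, …, n` (and `d` balls of each weight) is `k`-feasible, i.e. there is an
assignment of `d` balls to each bin so that the capacity constraints hold in bins
`lo + k, …, n` (the first `k` bins may be exceeded). -/
def Feas (d : ℕ) (w : ℕ → ℕ) (C : ℕ → ℤ) (lo n k : ℕ) : Prop :=
  ∃ m : ℕ → ℕ → ℕ,
    (∀ i ∈ Finset.Icc lo n, ∑ j ∈ Finset.Icc lo n, m i j = d) ∧
    (∀ j ∈ Finset.Icc lo n, ∑ i ∈ Finset.Icc lo n, m i j = d) ∧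
    (∀ t ∈ Finset.Icc (lo + k) n,
      ((∑ i ∈ Finset.Icc lo n, m i t * w i : ℕ) : ℤ) ≤ C t)

private lemma icc_split {M : Type*} [AddCommMonoid M] (f : ℕ → M) {i n : ℕ}
    (hi : 1 ≤ i) (hin : i ≤ n + 1) :
    ∑ t ∈ Finset.Icc 1 n, f t
      = (∑ t ∈ Finset.Icc 1 (i - 1), f t) + ∑ t ∈ Finset.Icc i n, f t := by
  have h1 : Finset.Icc 1 n = Finset.Ioc 0 n := Finset.Icc_add_one_left_eq_Ioc 0 n
  have h2 : Finset.Icc 1 (i - 1) = Finset.Ioc 0 (i - 1) := Finset.Icc_add_one_left_eq_Ioc 0 (i - 1)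
  have h3 : Finset.Icc i n = Finset.Ioc (i - 1) n := by
    rw [← Finset.Icc_add_one_left_eq_Ioc]; congr 1; omega
  rw [h1, h2, h3]
  exact (Finset.sum_Ioc_consecutive f (Nat.zero_le _) (by omega)).symm

private lemma icc_telescope (f : ℕ → ℤ) {i n : ℕ} (hi : 1 ≤ i) (hin : i ≤ n) :
    ∑ t ∈ Finset.Icc i n, (f t - f (t - 1)) = f n - f (i - 1) := by
  rw [← Finset.Ico_add_one_right_eq_Icc, Finset.sum_Ico_eq_sum_range]
  have key : ∀ k ∈ Finset.range (n + 1 - i),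
      f (i + k) - f (i + k - 1) = f (i - 1 + (k + 1)) - f (i - 1 + k) := by
    intro k _
    have e2 : i + k - 1 = i - 1 + k := by omega
    have e1 : i + k = i - 1 + (k + 1) := by omega
    rw [e2, e1]
  rw [Finset.sum_congr rfl key, Finset.sum_range_sub (fun k => f (i - 1 + k))]
  have e3 : i - 1 + (n + 1 - i) = n := by omega
  rw [e3, Nat.add_zero]

private lemma step_mono {n : ℕ} (w : ℕ → ℕ)
    (hw : ∀ t, 1 ≤ t → t < n → w (t + 1) ≤ w t) :
    ∀ s t, 1 ≤ s → s ≤ t → t ≤ n → w t ≤ w s := by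
  intro s t hs hst
  induction t, hst using Nat.le_induction with
  | base => intro _; exact le_rfl
  | succ t ht ih =>
    intro h
    exact le_trans (hw t (by omega) (by omega)) (ih (by omega))

/-- A transportation matrix with prescribed row sums `f` and column sums `g`. -/
private lemma transport (i n : ℕ) (hi : 1 ≤ i) (hin : i ≤ n) (f g : ℕ → ℕ)
    (hfg : ∑ u ∈ Finset.Icc i n, f u = ∑ v ∈ Finset.Icc i n, g v) :
    ∃ r : ℕ → ℕ → ℕ,
      (∀ s ∈ Finset.Icc i n, ∑ t ∈ Finset.Icc i n, r s t = f s) ∧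
      (∀ t ∈ Finset.Icc i n, ∑ s ∈ Finset.Icc i n, r s t = g t) := by
  set A : ℕ → ℕ := fun s => ∑ u ∈ Finset.Icc i s, f u with hA
  set B : ℕ → ℕ := fun t => ∑ v ∈ Finset.Icc i t, g v with hB
  have Amono : ∀ ⦃s s'⦄, s ≤ s' → A s ≤ A s' := by
    intro s s' h
    simp only [hA]
    exact Finset.sum_le_sum_of_subset (Finset.Icc_subset_Icc_right h)
  have Bmono : ∀ ⦃t t'⦄, t ≤ t' → B t ≤ B t' := by
    intro t t' h
    simp only [hB]
    exact Finset.sum_le_sum_of_subset (Finset.Icc_subset_Icc_right h)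
  have hempty : Finset.Icc i (i - 1) = ∅ := Finset.Icc_eq_empty (by omega)
  have A0 : A (i - 1) = 0 := by simp [hA, hempty]
  have B0 : B (i - 1) = 0 := by simp [hB, hempty]
  have AB : A n = B n := by simp only [hA, hB]; exact hfg
  have Astep : ∀ s, i ≤ s → A s = A (s - 1) + f s := by
    intro s hs
    simp only [hA]
    have h := Finset.sum_Icc_succ_top (by omega : i ≤ (s - 1) + 1) f
    rw [show (s - 1) + 1 = s from by omega] at h
    exact h
  have Bstep : ∀ t, i ≤ t → B t = B (t - 1) + g t := by
    intro t ht
    simp only [hB]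
    have h := Finset.sum_Icc_succ_top (by omega : i ≤ (t - 1) + 1) g
    rw [show (t - 1) + 1 = t from by omega] at h
    exact h
  refine ⟨fun s t => (min (A s) (B t) + min (A (s - 1)) (B (t - 1)))
      - (min (A (s - 1)) (B t) + min (A s) (B (t - 1))), ?_, ?_⟩
  · intro s hs
    rw [Finset.mem_Icc] at hs
    show ∑ t ∈ Finset.Icc i n, ((min (A s) (B t) + min (A (s - 1)) (B (t - 1)))
        - (min (A (s - 1)) (B t) + min (A s) (B (t - 1)))) = f s
    set F : ℕ → ℤ := fun t => ((min (A s) (B t) : ℕ) : ℤ) - ((min (A (s - 1)) (B t) : ℕ) : ℤ)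
      with hF
    have key : ∀ t ∈ Finset.Icc i n,
        (((min (A s) (B t) + min (A (s - 1)) (B (t - 1)))
          - (min (A (s - 1)) (B t) + min (A s) (B (t - 1))) : ℕ) : ℤ)
        = F t - F (t - 1) := by
      intro t _
      have h1 : A (s - 1) ≤ A s := Amono (by omega)
      have h2 : B (t - 1) ≤ B t := Bmono (by omega)
      simp only [hF]
      omega
    have hsum : ∑ t ∈ Finset.Icc i n,
        (((min (A s) (B t) + min (A (s - 1)) (B (t - 1)))
          - (min (A (s - 1)) (B t) + min (A s) (B (t - 1))) : ℕ) : ℤ) = (f s : ℤ) := by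
      rw [Finset.sum_congr rfl key, icc_telescope F hi hin]
      simp only [hF]
      have e4 := Astep s hs.1
      have e1 : min (A s) (B n) = A s := by rw [← AB]; exact min_eq_left (Amono hs.2)
      have e2 : min (A (s - 1)) (B n) = A (s - 1) := by
        rw [← AB]; exact min_eq_left (Amono (by omega))
      rw [e1, e2, B0]
      omega
    exact_mod_cast hsum
  · intro t ht
    rw [Finset.mem_Icc] at ht
    show ∑ s ∈ Finset.Icc i n, ((min (A s) (B t) + min (A (s - 1)) (B (t - 1)))
        - (min (A (s - 1)) (B t) + min (A s) (B (t - 1)))) = g t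
    set G : ℕ → ℤ := fun s => ((min (A s) (B t) : ℕ) : ℤ) - ((min (A s) (B (t - 1)) : ℕ) : ℤ)
      with hG
    have key : ∀ s ∈ Finset.Icc i n,
        (((min (A s) (B t) + min (A (s - 1)) (B (t - 1)))
          - (min (A (s - 1)) (B t) + min (A s) (B (t - 1))) : ℕ) : ℤ)
        = G s - G (s - 1) := by
      intro s _
      have h1 : A (s - 1) ≤ A s := Amono (by omega)
      have h2 : B (t - 1) ≤ B t := Bmono (by omega)
      simp only [hG]
      omega
    have hsum : ∑ s ∈ Finset.Icc i n,
        (((min (A s) (B t) + min (A (s - 1)) (B (t - 1)))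
          - (min (A (s - 1)) (B t) + min (A s) (B (t - 1))) : ℕ) : ℤ) = (g t : ℤ) := by
      rw [Finset.sum_congr rfl key, icc_telescope G hi hin]
      simp only [hG]
      have e4 := Bstep t ht.1
      have e1 : min (A n) (B t) = B t := by rw [AB]; exact min_eq_right (Bmono ht.2)
      have e2 : min (A n) (B (t - 1)) = B (t - 1) := by
        rw [AB]; exact min_eq_right (Bmono (by omega))
      rw [e1, e2, A0]
      omega
    exact_mod_cast hsum

/-- Lemma 7.1: for `i ≥ 1` and `j ≥ 0`, `BP(d, C; w)` is
`(i+j−1)`-feasible iff the truncated problem `BP(d, C^{≥i}; w^{≥i})` (with weights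
`w_i, …, w_n`, capacities `C_i, …, C_n`) is `j`-feasible. -/
theorem feasibility_truncation
    (n d i j : ℕ) (hn : 1 ≤ n) (hd : 1 ≤ d) (hi : 1 ≤ i) (hin : i ≤ n)
    (w : ℕ → ℕ) (C : ℕ → ℤ)
    (hw : ∀ t, 1 ≤ t → t < n → w (t + 1) ≤ w t)
    (hC : ∀ t, 1 ≤ t → t < n → C (t + 1) ≤ C t) :
    Feas d w C 1 n (i + j - 1) ↔ Feas d w C i n j := by
  have hij : 1 + (i + j - 1) = i + j := by omega
  have wmono : ∀ s t, 1 ≤ s → s ≤ t → t ≤ n → w t ≤ w s := step_mono w hw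
  have hcard : ∑ t ∈ Finset.Icc 1 (i - 1), d = (i - 1) * d := by
    have hc : (Finset.Icc 1 (i - 1)).card = i - 1 := by rw [Nat.card_Icc]; omega
    rw [Finset.sum_const, hc, smul_eq_mul]
  constructor
  · rintro ⟨m, hrow, hcol, hcap⟩
    rw [hij] at hcap
    -- total mass of heavy ball types in bins `≥ i` equals total deficit of light types
    have htot : (∑ u ∈ Finset.Icc i n, ∑ t ∈ Finset.Icc 1 (i - 1), m u t)
        = ∑ v ∈ Finset.Icc i n, ∑ s ∈ Finset.Icc 1 (i - 1), m s v := by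
      have e1 : ∑ u ∈ Finset.Icc 1 n, ∑ t ∈ Finset.Icc 1 (i - 1), m u t
          = (∑ u ∈ Finset.Icc 1 (i - 1), ∑ t ∈ Finset.Icc 1 (i - 1), m u t)
            + ∑ u ∈ Finset.Icc i n, ∑ t ∈ Finset.Icc 1 (i - 1), m u t :=
        icc_split _ hi (by omega)
      have e1' : ∑ u ∈ Finset.Icc 1 n, ∑ t ∈ Finset.Icc 1 (i - 1), m u t
          = (i - 1) * d := by
        rw [Finset.sum_comm, ← hcard]
        refine Finset.sum_congr rfl ?_
        intro t ht
        rw [Finset.mem_Icc] at ht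
        exact hcol t (Finset.mem_Icc.mpr ⟨ht.1, by omega⟩)
      have e2 : ∑ v ∈ Finset.Icc 1 n, ∑ s ∈ Finset.Icc 1 (i - 1), m s v
          = (∑ v ∈ Finset.Icc 1 (i - 1), ∑ s ∈ Finset.Icc 1 (i - 1), m s v)
            + ∑ v ∈ Finset.Icc i n, ∑ s ∈ Finset.Icc 1 (i - 1), m s v :=
        icc_split _ hi (by omega)
      have e2' : ∑ v ∈ Finset.Icc 1 n, ∑ s ∈ Finset.Icc 1 (i - 1), m s v
          = (i - 1) * d := by
        rw [Finset.sum_comm, ← hcard]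
        refine Finset.sum_congr rfl ?_
        intro s hs
        rw [Finset.mem_Icc] at hs
        exact hrow s (Finset.mem_Icc.mpr ⟨hs.1, by omega⟩)
      have e3 : (∑ u ∈ Finset.Icc 1 (i - 1), ∑ t ∈ Finset.Icc 1 (i - 1), m u t)
          = ∑ v ∈ Finset.Icc 1 (i - 1), ∑ s ∈ Finset.Icc 1 (i - 1), m s v :=
        Finset.sum_comm
      omega
    obtain ⟨r, hrrow, hrcol⟩ := transport i n hi hin
      (fun u => ∑ t ∈ Finset.Icc 1 (i - 1), m u t)
      (fun v => ∑ s ∈ Finset.Icc 1 (i - 1), m s v) htot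
    refine ⟨fun s t => m s t + r s t, ?_, ?_, ?_⟩
    · intro s hs
      have hs' := Finset.mem_Icc.mp hs
      show ∑ t ∈ Finset.Icc i n, (m s t + r s t) = d
      rw [Finset.sum_add_distrib]
      have hb : ∑ t ∈ Finset.Icc i n, r s t = ∑ t ∈ Finset.Icc 1 (i - 1), m s t :=
        hrrow s hs
      have hsplit : ∑ t ∈ Finset.Icc 1 n, m s t
          = (∑ t ∈ Finset.Icc 1 (i - 1), m s t) + ∑ t ∈ Finset.Icc i n, m s t :=
        icc_split _ hi (by omega)
      have hd' : ∑ t ∈ Finset.Icc 1 n, m s t = d :=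
        hrow s (Finset.mem_Icc.mpr ⟨by omega, hs'.2⟩)
      omega
    · intro t ht
      have ht' := Finset.mem_Icc.mp ht
      show ∑ s ∈ Finset.Icc i n, (m s t + r s t) = d
      rw [Finset.sum_add_distrib]
      have ha : ∑ s ∈ Finset.Icc i n, r s t = ∑ s ∈ Finset.Icc 1 (i - 1), m s t :=
        hrcol t ht
      have hsplit : ∑ s ∈ Finset.Icc 1 n, m s t
          = (∑ s ∈ Finset.Icc 1 (i - 1), m s t) + ∑ s ∈ Finset.Icc i n, m s t :=
        icc_split _ hi (by omega)
      have hd' : ∑ s ∈ Finset.Icc 1 n, m s t = d :=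
        hcol t (Finset.mem_Icc.mpr ⟨by omega, ht'.2⟩)
      omega
    · intro t ht
      have ht' := Finset.mem_Icc.mp ht
      have htI : t ∈ Finset.Icc i n := Finset.mem_Icc.mpr ⟨by omega, ht'.2⟩
      show ((∑ s ∈ Finset.Icc i n, (m s t + r s t) * w s : ℕ) : ℤ) ≤ C t
      have hnat : (∑ s ∈ Finset.Icc i n, (m s t + r s t) * w s)
          ≤ ∑ s ∈ Finset.Icc 1 n, m s t * w s := by
        have h1 : (∑ s ∈ Finset.Icc i n, (m s t + r s t) * w s)
            = (∑ s ∈ Finset.Icc i n, m s t * w s) + ∑ s ∈ Finset.Icc i n, r s t * w s := by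
          rw [← Finset.sum_add_distrib]
          exact Finset.sum_congr rfl fun s _ => add_mul _ _ _
        have h2 : (∑ s ∈ Finset.Icc i n, r s t * w s)
            ≤ (∑ s ∈ Finset.Icc i n, r s t) * w i := by
          rw [Finset.sum_mul]
          refine Finset.sum_le_sum ?_
          intro s hs
          have hs' := Finset.mem_Icc.mp hs
          exact Nat.mul_le_mul le_rfl (wmono i s hi hs'.1 hs'.2)
        have h3 : (∑ s ∈ Finset.Icc i n, r s t) = ∑ s ∈ Finset.Icc 1 (i - 1), m s t :=
          hrcol t htI
        have h4 : (∑ s ∈ Finset.Icc 1 (i - 1), m s t) * w i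
            ≤ ∑ s ∈ Finset.Icc 1 (i - 1), m s t * w s := by
          rw [Finset.sum_mul]
          refine Finset.sum_le_sum ?_
          intro s hs
          have hs' := Finset.mem_Icc.mp hs
          exact Nat.mul_le_mul le_rfl (wmono s i hs'.1 (by omega) hin)
        rw [h3] at h2
        have h5 : ∑ s ∈ Finset.Icc 1 n, m s t * w s
            = (∑ s ∈ Finset.Icc 1 (i - 1), m s t * w s)
              + ∑ s ∈ Finset.Icc i n, m s t * w s :=
          icc_split _ hi (by omega)
        omega
      calc ((∑ s ∈ Finset.Icc i n, (m s t + r s t) * w s : ℕ) : ℤ)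
          ≤ ((∑ s ∈ Finset.Icc 1 n, m s t * w s : ℕ) : ℤ) := by exact_mod_cast hnat
        _ ≤ C t := hcap t (Finset.mem_Icc.mpr ⟨ht'.1, ht'.2⟩)
  · rintro ⟨m, hrow, hcol, hcap⟩
    refine ⟨fun s t => if s < i ∨ t < i then (if s = t then d else 0) else m s t, ?_, ?_, ?_⟩
    · intro s hs
      have hs' := Finset.mem_Icc.mp hs
      show ∑ t ∈ Finset.Icc 1 n,
        (if s < i ∨ t < i then (if s = t then d else 0) else m s t) = d
      rcases lt_or_ge s i with hsi | hsi
      · have key : ∀ t ∈ Finset.Icc 1 n,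
            (if s < i ∨ t < i then (if s = t then d else 0) else m s t)
            = if s = t then d else 0 := by
          intro t _
          rw [if_pos (Or.inl hsi)]
        rw [Finset.sum_congr rfl key, Finset.sum_ite_eq, if_pos hs]
      · have key1 : ∀ t ∈ Finset.Icc 1 (i - 1),
            (if s < i ∨ t < i then (if s = t then d else 0) else m s t) = 0 := by
          intro t ht
          have ht' := Finset.mem_Icc.mp ht
          rw [if_pos (Or.inr (by omega)), if_neg (by omega)]
        have key2 : ∀ t ∈ Finset.Icc i n,
            (if s < i ∨ t < i then (if s = t then d else 0) else m s t) = m s t := by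
          intro t ht
          have ht' := Finset.mem_Icc.mp ht
          rw [if_neg (by push_neg; omega)]
        rw [icc_split (fun t => if s < i ∨ t < i then (if s = t then d else 0) else m s t)
            hi (by omega),
          Finset.sum_congr rfl key1, Finset.sum_congr rfl key2,
          Finset.sum_const_zero, Nat.zero_add]
        exact hrow s (Finset.mem_Icc.mpr ⟨hsi, hs'.2⟩)
    · intro t ht
      have ht' := Finset.mem_Icc.mp ht
      show ∑ s ∈ Finset.Icc 1 n,
        (if s < i ∨ t < i then (if s = t then d else 0) else m s t) = d
      rcases lt_or_ge t i with hti | hti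
      · have key : ∀ s ∈ Finset.Icc 1 n,
            (if s < i ∨ t < i then (if s = t then d else 0) else m s t)
            = if t = s then d else 0 := by
          intro s _
          rw [if_pos (Or.inr hti)]
          by_cases h : s = t
          · rw [if_pos h, if_pos h.symm]
          · rw [if_neg h, if_neg (fun h' => h h'.symm)]
        rw [Finset.sum_congr rfl key, Finset.sum_ite_eq, if_pos ht]
      · have key1 : ∀ s ∈ Finset.Icc 1 (i - 1),
            (if s < i ∨ t < i then (if s = t then d else 0) else m s t) = 0 := by
          intro s hs
          have hs' := Finset.mem_Icc.mp hs
          rw [if_pos (Or.inl (by omega)), if_neg (by omega)]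
        have key2 : ∀ s ∈ Finset.Icc i n,
            (if s < i ∨ t < i then (if s = t then d else 0) else m s t) = m s t := by
          intro s hs
          have hs' := Finset.mem_Icc.mp hs
          rw [if_neg (by push_neg; omega)]
        rw [icc_split (fun s => if s < i ∨ t < i then (if s = t then d else 0) else m s t)
            hi (by omega),
          Finset.sum_congr rfl key1, Finset.sum_congr rfl key2,
          Finset.sum_const_zero, Nat.zero_add]
        exact hcol t (Finset.mem_Icc.mpr ⟨hti, ht'.2⟩)
    · intro t ht
      have ht' := Finset.mem_Icc.mp ht
      have hti : i ≤ t := by omega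
      show ((∑ s ∈ Finset.Icc 1 n,
          (if s < i ∨ t < i then (if s = t then d else 0) else m s t) * w s : ℕ) : ℤ) ≤ C t
      have key1 : ∀ s ∈ Finset.Icc 1 (i - 1),
          (if s < i ∨ t < i then (if s = t then d else 0) else m s t) * w s = 0 := by
        intro s hs
        have hs' := Finset.mem_Icc.mp hs
        rw [if_pos (Or.inl (by omega)), if_neg (by omega), Nat.zero_mul]
      have key2 : ∀ s ∈ Finset.Icc i n,
          (if s < i ∨ t < i then (if s = t then d else 0) else m s t) * w s
          = m s t * w s := by
        intro s hs
        have hs' := Finset.mem_Icc.mp hs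
        rw [if_neg (by push_neg; omega)]
      rw [icc_split
          (fun s => (if s < i ∨ t < i then (if s = t then d else 0) else m s t) * w s)
          hi (by omega),
        Finset.sum_congr rfl key1, Finset.sum_congr rfl key2,
        Finset.sum_const_zero, Nat.zero_add]
      exact hcap t (Finset.mem_Icc.mpr ⟨by omega, ht'.2⟩)
end

section
/- Suppose the weights w_1 > w_2 > ... > w_n ≥ 0 are strictly decreasing and d ≥ n. Then the capacity sequence C° from the optimality construction satisfies Σ_{j=i}^{n} C°_j ≥ d·(w_i + ... + w_n) + b(w^{≥i}) for every i ≥ 2, while Σ_{j=1}^{n} C°_j = d·(w_1 + ... + w_n) + b(w) − 1. -/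
/-! The gap terms `w (j - 1) - w j` of `C°` telescope, so
`∑_{k < j ≤ n} C°_j = d ∑_{k < j ≤ n} w_j + (w_k - w_n) - (n - k)`.
For `k = i - 1` strict decrease gives `w_{i-1} ≥ w_i + 1`, hence the inequality;
for `k = 1` adding `C°_1 = d w_1 - 1` gives the equality. -/

open Finset

theorem Finset.sum_Ioc_pred_sub {M : Type*} [AddCommGroup M] (f : ℕ → M) {k n : ℕ} (hkn : k ≤ n) :
    ∑ j ∈ Ioc k n, (f (j - 1) - f j) = f k - f n := by
  induction n, hkn using Nat.le_induction with
  | base => simp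
  | succ n hkn ih =>
    rw [sum_Ioc_succ_top hkn, ih, Nat.add_sub_cancel]
    abel

theorem sum_Ioc_eq_of_eq_mul_add_gap {R : Type*} [CommRing R] (d : R) (w C : ℕ → R) {k n : ℕ}
    (hkn : k ≤ n) (hC : ∀ j ∈ Ioc k n, C j = d * w j + (w (j - 1) - w j - 1)) :
    ∑ j ∈ Ioc k n, C j = d * ∑ j ∈ Ioc k n, w j + (w k - w n) - (n - k : ℕ) := by
  rw [sum_congr rfl hC, sum_add_distrib, sum_sub_distrib, ← mul_sum,
    sum_Ioc_pred_sub w hkn, sum_const, Nat.card_Ioc, nsmul_one]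
  ring

theorem cCirc_distinct_weights_general
    (n d : ℕ) (hn : 2 ≤ n)
    (w : ℕ → ℕ) (C : ℕ → ℤ)
    (hw : ∀ i, 1 ≤ i → i < n → w (i + 1) < w i)
    (hC1 : C 1 = (d : ℤ) * w 1 - 1)
    (hCj : ∀ j, 2 ≤ j → j ≤ n → C j = (d : ℤ) * w j + ((w (j - 1) : ℤ) - w j - 1)) :
    (∀ i, 2 ≤ i → i ≤ n →
      (d : ℤ) * (∑ j ∈ Finset.Icc i n, (w j : ℤ)) +
        ((w i : ℤ) - w n - ((n : ℤ) - i + 1) + 1) ≤ ∑ j ∈ Finset.Icc i n, C j) ∧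
    ∑ j ∈ Finset.Icc 1 n, C j =
      (d : ℤ) * (∑ j ∈ Finset.Icc 1 n, (w j : ℤ)) + ((w 1 : ℤ) - w n - n + 1) - 1 := by
  have hsum : ∀ k, 1 ≤ k → k ≤ n → ∑ j ∈ Ioc k n, C j =
      d * ∑ j ∈ Ioc k n, (w j : ℤ) + (w k - w n) - (n - k : ℕ) := fun k hk hkn ↦
    sum_Ioc_eq_of_eq_mul_add_gap _ _ _ hkn fun j hj ↦ by
      rw [mem_Ioc] at hj
      exact hCj j (by omega) hj.2
  constructor
  · rintro i hi hin
    obtain ⟨k, rfl⟩ : ∃ k, i = k + 1 := ⟨i - 1, by omega⟩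
    have hgap : w (k + 1) < w k := hw k (by omega) (by omega)
    rw [Icc_add_one_left_eq_Ioc, hsum k (by omega) (by omega), Nat.cast_sub (by omega)]
    push_cast
    omega
  · rw [← add_sum_Ioc_eq_sum_Icc (by omega), ← add_sum_Ioc_eq_sum_Icc (by omega),
      hsum 1 le_rfl (by omega), hC1, Nat.cast_sub (by omega)]
    push_cast
    ring

/-- for strictly decreasing weights `w_1 > w_2 > ⋯ > w_n ≥ 0` and
`d ≥ n`, the capacity sequence `C°` (which specializes to `C°_1 = d·w_1 − 1` and
`C°_j = d·w_j + (w_{j−1} − w_j − 1)` for `2 ≤ j ≤ n`) satisfies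
`Σ_{j=i}^n C°_j ≥ d·(w_i + ⋯ + w_n) + b(w^{≥i})` for every `i ≥ 2`, where
`b(w^{≥i}) = w_i − w_n − (n − i + 1) + 1`, while
`Σ_{j=1}^n C°_j = d·(w_1 + ⋯ + w_n) + b(w) − 1` with `b(w) = w_1 − w_n − n + 1`. -/
theorem cCirc_distinct_weights
    (n d : ℕ) (hn : 2 ≤ n) (hd : n ≤ d)
    (w : ℕ → ℕ) (C : ℕ → ℤ)
    (hw : ∀ i, 1 ≤ i → i < n → w (i + 1) < w i)
    (hC1 : C 1 = (d : ℤ) * w 1 - 1)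
    (hCj : ∀ j, 2 ≤ j → j ≤ n → C j = (d : ℤ) * w j + ((w (j - 1) : ℤ) - w j - 1)) :
    (∀ i, 2 ≤ i → i ≤ n →
      (d : ℤ) * (∑ j ∈ Finset.Icc i n, (w j : ℤ)) +
        ((w i : ℤ) - w n - ((n : ℤ) - i + 1) + 1) ≤ ∑ j ∈ Finset.Icc i n, C j) ∧
    ∑ j ∈ Finset.Icc 1 n, C j =
      (d : ℤ) * (∑ j ∈ Finset.Icc 1 n, (w j : ℤ)) + ((w 1 : ℤ) - w n - n + 1) - 1 :=
  cCirc_distinct_weights_general n d hn w C hw hC1 hCj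
end
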